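/- Let F : ℝ → ℝ be a degree-one lift and suppose there exist a degree-one lift H and an integer m such that H(F(x)) = F⁻¹(H(x)) + m for all x ∈ ℝ (i.e. the induced circle homeomorphism f is conjugate to its inverse by an orientation-preserving circle homeomorphism). Then f² has a fixed point: there exist x ∈ ℝ and k ∈ ℤ with F(F(x)) = x + k. -/

import Mathlib

/-!
If `h ∘ f = (· + m) ∘ f⁻¹ ∘ h` for a degree-one lift `h`, then `f` and `x ↦ f⁻¹ x + m` have the
same translation number. Translation by the integer `m` commutes with `f⁻¹`, so the latter is
`m - τ f`; hence `τ f = m / 2` and `τ (f²) = m`. A continuous lift with integer translation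
number `m` moves some point by exactly `m`.
-/

open Function

namespace CircleDeg1Lift

theorem continuous_units (f : CircleDeg1Liftˣ) : Continuous f :=
  (f : CircleDeg1Lift).continuous_iff_surjective.2 (toOrderIso f).surjective

theorem coe_units_inv_eq_of_rightInverse {f : CircleDeg1Liftˣ} {g : ℝ → ℝ}
    (hg : RightInverse g f) : ⇑(f⁻¹ : CircleDeg1Liftˣ) = g :=
  funext fun x => by simpa [hg x] using units_inv_apply_apply f (g x)

theorem translationNumber_eq_half_of_semiconj_inv {f : CircleDeg1Liftˣ} {h : CircleDeg1Lift}
    {m : ℤ} (hm : ∀ x, h (f x) = (f⁻¹ : CircleDeg1Liftˣ) (h x) + m) :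
    translationNumber f = m / 2 := by
  set g : CircleDeg1Lift := translate (Multiplicative.ofAdd (m : ℝ)) * ↑f⁻¹
  have hsemiconj : Semiconj h f g := fun x => by
    rw [hm, add_comm]
    rfl
  have hcomm : Commute (translate (Multiplicative.ofAdd (m : ℝ)) : CircleDeg1Lift) ↑f⁻¹ :=
    commute_iff_commute.2 fun x => by
      simp only [translate_apply, map_int_add]
  have hτg : translationNumber g = m - translationNumber f := by
    rw [translationNumber_mul_of_commute hcomm, translationNumber_translate,
      translationNumber_units_inv, sub_eq_add_neg]
  linarith [translationNumber_eq_of_semiconj hsemiconj]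

theorem exists_map_map_eq_add_int_of_semiconj_inv {f : CircleDeg1Liftˣ} {h : CircleDeg1Lift}
    {m : ℤ} (hm : ∀ x, h (f x) = (f⁻¹ : CircleDeg1Liftˣ) (h x) + m) :
    ∃ x, f (f x) = x + m := by
  have hτ : translationNumber f = m / (2 : ℕ) := by
    exact_mod_cast translationNumber_eq_half_of_semiconj_inv hm
  obtain ⟨x, hx⟩ := (translationNumber_eq_rat_iff _ (continuous_units f) two_pos).1 hτ
  exact ⟨x, by simpa [sq] using hx⟩

end CircleDeg1Lift

theorem stmt_3_general (F : ℝ → ℝ) (hFmono : StrictMono F)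
    (hFper : ∀ x : ℝ, F (x + 1) = F x + 1)
    (Finv : ℝ → ℝ)
    (hFinv₂ : Function.RightInverse Finv F)
    (H : ℝ → ℝ) (hHmono : StrictMono H)
    (hHper : ∀ x : ℝ, H (x + 1) = H x + 1)
    (m : ℤ) (hconj : ∀ x : ℝ, H (F x) = Finv (H x) + m) :
    ∃ (x : ℝ) (k : ℤ), F (F x) = x + k := by
  let f : CircleDeg1Lift := ⟨⟨F, hFmono.monotone⟩, hFper⟩
  let h : CircleDeg1Lift := ⟨⟨H, hHmono.monotone⟩, hHper⟩
  obtain ⟨u, hu⟩ := (CircleDeg1Lift.isUnit_iff_bijective (f := f)).2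
    ⟨hFmono.injective, hFinv₂.surjective⟩
  have huF (x : ℝ) : u x = F x := by rw [hu]; rfl
  have hinv := CircleDeg1Lift.coe_units_inv_eq_of_rightInverse (f := u) fun x =>
    (huF _).trans (hFinv₂ x)
  obtain ⟨x, hx⟩ := CircleDeg1Lift.exists_map_map_eq_add_int_of_semiconj_inv (h := h) (m := m)
    fun x => by rw [huF, hinv]; exact hconj x
  exact ⟨x, m, by rwa [huF, huF] at hx⟩

/-- If a degree-one lift `F` induces a circle homeomorphism `f` that is conjugate
to its inverse by an orientation-preserving circle homeomorphism, then `f²` has a fixed point: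
there are `x ∈ ℝ` and `k ∈ ℤ` with `F (F x) = x + k`. -/
theorem stmt_3 (F : ℝ → ℝ) (hFmono : StrictMono F) (hFcont : Continuous F)
    (hFper : ∀ x : ℝ, F (x + 1) = F x + 1)
    (Finv : ℝ → ℝ) (hFinv₁ : Function.LeftInverse Finv F)
    (hFinv₂ : Function.RightInverse Finv F)
    (H : ℝ → ℝ) (hHmono : StrictMono H) (hHcont : Continuous H)
    (hHper : ∀ x : ℝ, H (x + 1) = H x + 1)
    (m : ℤ) (hconj : ∀ x : ℝ, H (F x) = Finv (H x) + m) :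
    ∃ (x : ℝ) (k : ℤ), F (F x) = x + k :=
  stmt_3_general F hFmono hFper Finv hFinv₂ H hHmono hHper m hconj
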